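/- If square matrices A and B over a ring R satisfy A = UV and B = VU for some matrices U, V over R, then the matrices (I_n - tA) ⊕ I_m and (I_m - tB) ⊕ I_n over R[t] are equivalent via matrices that are products of elementary matrices over R[t]; in particular there exist E, F in the elementary group El(R[t]) with E·((I-tA) ⊕ I)·F = (I-tB) ⊕ I. -/

import Mathlib

open Matrix Polynomial

/-- `E` is an elementary matrix: the identity altered in a single off-diagonal entry. -/
def IsElementary {ι : Type*} [DecidableEq ι] {S : Type*} [Semiring S] (E : Matrix ι ι S) : Prop :=
  ∃ i j c, i ≠ j ∧ E = 1 + Matrix.single i j c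

/-- `E` is a product of elementary matrices. -/
def IsElemProd {ι : Type*} [DecidableEq ι] [Fintype ι] {S : Type*} [Semiring S]
    (E : Matrix ι ι S) : Prop :=
  ∃ L : List (Matrix ι ι S), (∀ X ∈ L, IsElementary X) ∧ E = L.prod

/-!
Over `R[t]` take `u = U` and `v = t V`, so that `u v = t A` and `v u = t B` because `t` is central.
Whitehead's identity `L(-v) N(u) ((1 - u v) ⊕ 1) L(v) N(-u) = 1 ⊕ (1 - v u)`, where
`N(x) = [[1, x], [0, 1]]` and `L(y) = [[1, 0], [y, 1]]`, gives the equivalence. Each `N(x)` and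
`L(y)` is a product of elementary matrices, as `x ↦ N(x)` turns sums into products and sends a
matrix unit to an elementary matrix.
-/

section Elementary

variable {ι : Type*} [DecidableEq ι] [Fintype ι] {S : Type*} [Semiring S]

theorem IsElemProd.one : IsElemProd (1 : Matrix ι ι S) :=
  ⟨[], by simp, rfl⟩

theorem IsElementary.isElemProd {E : Matrix ι ι S} (hE : IsElementary E) : IsElemProd E :=
  ⟨[E], by simpa using hE, by simp⟩

theorem IsElemProd.mul {E F : Matrix ι ι S} (hE : IsElemProd E) (hF : IsElemProd F) :
    IsElemProd (E * F) := by
  obtain ⟨L₁, h₁, rfl⟩ := hE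
  obtain ⟨L₂, h₂, rfl⟩ := hF
  refine ⟨L₁ ++ L₂, fun X hX => ?_, (List.prod_append ..).symm⟩
  rcases List.mem_append.1 hX with h | h
  exacts [h₁ X h, h₂ X h]

end Elementary

section BlockTriangular

variable {ι κ : Type*} [DecidableEq ι] [DecidableEq κ] [Fintype ι] [Fintype κ]
  {S : Type*} [Semiring S]

theorem isElemProd_fromBlocks_upper (M : Matrix ι κ S) :
    IsElemProd (fromBlocks 1 M 0 1) := by
  induction M using Matrix.induction_on' with
  | h_zero => rw [fromBlocks_one]; exact IsElemProd.one
  | h_add p q hp hq =>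
    simpa [fromBlocks_multiply, add_comm p q] using hp.mul hq
  | h_std_basis i j c =>
    refine IsElementary.isElemProd ⟨Sum.inl i, Sum.inr j, c, Sum.inl_ne_inr, ?_⟩
    ext (i' | i') (j' | j') <;> simp [one_apply, single_apply]

theorem isElemProd_fromBlocks_lower (M : Matrix κ ι S) :
    IsElemProd (fromBlocks 1 0 M 1) := by
  induction M using Matrix.induction_on' with
  | h_zero => rw [fromBlocks_one]; exact IsElemProd.one
  | h_add p q hp hq =>
    simpa [fromBlocks_multiply] using hp.mul hq
  | h_std_basis i j c =>
    refine IsElementary.isElemProd ⟨Sum.inr i, Sum.inl j, c, Sum.inr_ne_inl, ?_⟩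
    ext (i' | i') (j' | j') <;> simp [one_apply, single_apply]

end BlockTriangular

theorem fromBlocks_whitehead {ι κ S : Type*} [DecidableEq ι] [DecidableEq κ] [Fintype ι]
    [Fintype κ] [Ring S] (u : Matrix ι κ S) (v : Matrix κ ι S) :
    fromBlocks 1 0 (-v) 1 * fromBlocks 1 u 0 1 * fromBlocks (1 - u * v) 0 0 1 *
        (fromBlocks 1 0 v 1 * fromBlocks 1 (-u) 0 1) = fromBlocks 1 0 0 (1 - v * u) := by
  simp only [fromBlocks_multiply, Matrix.mul_one, Matrix.one_mul, Matrix.mul_zero,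
    add_zero, zero_add, Matrix.neg_mul, Matrix.mul_neg, fromBlocks_inj]
  refine ⟨by abel, ?_, ?_, ?_⟩ <;>
  · simp only [Matrix.sub_mul, Matrix.mul_sub, Matrix.add_mul, Matrix.mul_add,
      Matrix.one_mul, Matrix.mul_one, Matrix.neg_mul, Matrix.mul_neg, Matrix.mul_assoc, neg_neg]
    abel

theorem Matrix.mul_smul_of_commute {l m o α : Type*} [Fintype m] [Semiring α]
    (M : Matrix l m α) {c : α} (hc : ∀ i j, Commute c (M i j)) (N : Matrix m o α) :
    M * (c • N) = c • (M * N) := by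
  ext i k
  simp only [mul_apply, smul_apply, smul_eq_mul, Finset.mul_sum, ← mul_assoc, (hc _ _).eq]

theorem Matrix.map_C_mul_X_smul_map_C {l m o R : Type*} [Fintype m] [Ring R]
    (U : Matrix l m R) (V : Matrix m o R) :
    U.map (fun r => C r) * ((X : R[X]) • V.map (fun r => C r)) =
      (X : R[X]) • (U * V).map (fun r => C r) := by
  rw [Matrix.mul_smul_of_commute _ fun _ _ => commute_X _, Matrix.map_mul]

theorem Matrix.X_smul_map_C_mul_map_C {l m o R : Type*} [Fintype m] [Ring R]
    (U : Matrix l m R) (V : Matrix m o R) :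
    ((X : R[X]) • U.map (fun r => C r)) * V.map (fun r => C r) =
      (X : R[X]) • (U * V).map (fun r => C r) := by
  rw [Matrix.smul_mul, Matrix.map_mul]

/-- If `A = UV` and `B = VU`, then `(I - tA) ⊕ I_m` and `(I - tB) ⊕ I_n` are equivalent
via products of elementary matrices over `R[t]`. -/
theorem stmt7 {R : Type*} [Ring R] {n m : ℕ}
    (A : Matrix (Fin n) (Fin n) R) (B : Matrix (Fin m) (Fin m) R)
    (U : Matrix (Fin n) (Fin m) R) (V : Matrix (Fin m) (Fin n) R)
    (hA : A = U * V) (hB : B = V * U) :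
    ∃ E F : Matrix (Fin n ⊕ Fin m) (Fin n ⊕ Fin m) (Polynomial R),
      IsElemProd E ∧ IsElemProd F ∧
      E * fromBlocks (1 - (Polynomial.X : Polynomial R) • A.map (fun r => Polynomial.C r))
            (0 : Matrix (Fin n) (Fin m) (Polynomial R))
            (0 : Matrix (Fin m) (Fin n) (Polynomial R)) 1 * F
        = (Matrix.reindex (Equiv.sumComm (Fin m) (Fin n)) (Equiv.sumComm (Fin m) (Fin n)))
            (fromBlocks (1 - (Polynomial.X : Polynomial R) • B.map (fun r => Polynomial.C r))
              (0 : Matrix (Fin m) (Fin n) (Polynomial R))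
              (0 : Matrix (Fin n) (Fin m) (Polynomial R)) 1) := by
  subst hA hB
  rw [← Matrix.map_C_mul_X_smul_map_C, ← Matrix.X_smul_map_C_mul_map_C, reindex_apply,
    Equiv.sumComm_symm, Equiv.sumComm_apply, fromBlocks_submatrix_sum_swap_sum_swap,
    ← fromBlocks_whitehead]
  exact ⟨_, _, (isElemProd_fromBlocks_lower _).mul (isElemProd_fromBlocks_upper _),
    (isElemProd_fromBlocks_lower _).mul (isElemProd_fromBlocks_upper _), rfl⟩
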